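/- arXiv:0704.0112 — 2 statements merged into one kernel-verified Lean document; each statement's English description precedes it below -/
import Mathlib

section
/- For every natural number n ≥ 2 and every S with 1 ≤ S ≤ 2^n − 1, the number of XOR-triples contained in {1, 2, …, 2^n − 1} that contain S is exactly 2^{n−1} − 1. -/
/-!
Every `b ≠ S` in `U = {1, …, 2^n - 1}` lies in exactly one XOR-triple through `S`, namely
`{S, b, S ^^^ b}`, and each such triple is hit by exactly its two elements other than `S`.
Double counting gives `2 · #triples = #U - 1 = 2^n - 2`.
-/

/-- An XOR-triple is a 3-element set of positive natural numbers `{a, b, c}`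
with `a ^^^ b = c`; this condition is symmetric in `a`, `b`, `c`. -/
def IsXorTriple (t : Finset ℕ) : Prop :=
  t.card = 3 ∧ (∀ x ∈ t, 0 < x) ∧ ∃ a ∈ t, ∃ b ∈ t, a ≠ b ∧ a ^^^ b ∈ t

instance : DecidablePred IsXorTriple := fun t => by
  unfold IsXorTriple; infer_instance

lemma card_insert_xor {a b : ℕ} (ha : a ≠ 0) (hb : b ≠ 0) (hab : a ≠ b) :
    ({a, b, a ^^^ b} : Finset ℕ).card = 3 := by
  have hxa : a ^^^ b ≠ a := by
    simpa using (Nat.xor_right_inj (x := a) (y := b) (z := 0)).not.mpr hb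
  have hxb : a ^^^ b ≠ b := by
    simpa using (Nat.xor_left_inj (x := a) (y := 0) (z := b)).not.mpr ha
  exact Finset.card_eq_three.mpr ⟨a, b, a ^^^ b, hab, hxa.symm, hxb.symm, rfl⟩

lemma isXorTriple_insert_xor {a b : ℕ} (ha : 0 < a) (hb : 0 < b) (hab : a ≠ b) :
    IsXorTriple {a, b, a ^^^ b} := by
  refine ⟨card_insert_xor ha.ne' hb.ne' hab, ?_, a, by simp, b, by simp, hab, by simp⟩
  simp only [Finset.mem_insert, Finset.mem_singleton, forall_eq_or_imp, forall_eq]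
  exact ⟨ha, hb, Nat.pos_of_ne_zero (Nat.xor_ne_zero_iff.mpr hab)⟩

namespace IsXorTriple

variable {t : Finset ℕ}

lemma exists_eq_insert_xor (ht : IsXorTriple t) :
    ∃ a b, 0 < a ∧ 0 < b ∧ a ≠ b ∧ t = {a, b, a ^^^ b} := by
  obtain ⟨hcard, hpos, a, ha, b, hb, hab, hxor⟩ := ht
  refine ⟨a, b, hpos a ha, hpos b hb, hab, (Finset.eq_of_subset_of_card_le ?_ ?_).symm⟩
  · simp [Finset.insert_subset_iff, ha, hb, hxor]
  · rw [hcard, card_insert_xor (hpos a ha).ne' (hpos b hb).ne' hab]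

lemma xor_mem (ht : IsXorTriple t) {x y : ℕ} (hx : x ∈ t) (hy : y ∈ t) (hxy : x ≠ y) :
    x ^^^ y ∈ t := by
  obtain ⟨a, b, -, -, -, rfl⟩ := ht.exists_eq_insert_xor
  simp only [Finset.mem_insert, Finset.mem_singleton] at hx hy ⊢
  rcases hx with rfl | rfl | rfl <;> rcases hy with rfl | rfl | rfl <;> simp_all [Nat.xor_comm]

lemma eq_insert_xor_of_mem (ht : IsXorTriple t) {x y : ℕ} (hx : x ∈ t) (hy : y ∈ t)
    (hxy : x ≠ y) : t = {x, y, x ^^^ y} := by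
  refine (Finset.eq_of_subset_of_card_le ?_ ?_).symm
  · simp [Finset.insert_subset_iff, hx, hy, ht.xor_mem hx hy hxy]
  · rw [ht.1, card_insert_xor (ht.2.1 x hx).ne' (ht.2.1 y hy).ne' hxy]

end IsXorTriple

lemma two_mul_card_xorTriples_through {U : Finset ℕ} {S : ℕ} (hpos : ∀ x ∈ U, 0 < x)
    (hSU : S ∈ U) (hclosed : ∀ b ∈ U, b ≠ S → S ^^^ b ∈ U) :
    2 * (U.powerset.filter (fun t => IsXorTriple t ∧ S ∈ t)).card = U.card - 1 := by
  set T := U.powerset.filter (fun t => IsXorTriple t ∧ S ∈ t)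
  have hmaps : Set.MapsTo (fun b => ({S, b, S ^^^ b} : Finset ℕ)) (U.erase S) T := by
    intro b hb
    obtain ⟨hbS, hbU⟩ := Finset.mem_erase.mp hb
    simp only [T, Finset.coe_filter, Finset.mem_powerset, Set.mem_ofPred_eq]
    refine ⟨?_, isXorTriple_insert_xor (hpos S hSU) (hpos b hbU) (Ne.symm hbS), by simp⟩
    simp [Finset.insert_subset_iff, hSU, hbU, hclosed b hbU hbS]
  have hfiber : ∀ t ∈ T, ((U.erase S).filter (fun b => {S, b, S ^^^ b} = t)).card = 2 := by
    intro t ht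
    obtain ⟨htU, ht3, hSt⟩ := Finset.mem_filter.mp ht
    suffices (U.erase S).filter (fun b => {S, b, S ^^^ b} = t) = t.erase S by
      rw [this, Finset.card_erase_of_mem hSt, ht3.1]
    ext b
    simp only [Finset.mem_filter, Finset.mem_erase]
    constructor
    · rintro ⟨⟨hbS, -⟩, rfl⟩
      exact ⟨hbS, by simp⟩
    · rintro ⟨hbS, hbt⟩
      exact ⟨⟨hbS, Finset.mem_powerset.mp htU hbt⟩,
        (ht3.eq_insert_xor_of_mem hSt hbt hbS.symm).symm⟩
  rw [← Finset.card_erase_of_mem hSU, Finset.card_eq_sum_card_fiberwise hmaps,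
    Finset.sum_congr rfl hfiber, Finset.sum_const, smul_eq_mul, mul_comm]

theorem xor_triples_through_S_general (n S : ℕ) (hS1 : 1 ≤ S) (hS : S ≤ 2 ^ n - 1) :
    ((Finset.Icc 1 (2 ^ n - 1)).powerset.filter (fun t => IsXorTriple t ∧ S ∈ t)).card
      = 2 ^ (n - 1) - 1 := by
  have hclosed :
      ∀ b ∈ Finset.Icc 1 (2 ^ n - 1), b ≠ S → S ^^^ b ∈ Finset.Icc 1 (2 ^ n - 1) := by
    intro b hb hbS
    have hlt : S ^^^ b < 2 ^ n := Nat.xor_lt_two_pow (by omega) (by have := (Finset.mem_Icc.mp hb).2; omega)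
    have hne : S ^^^ b ≠ 0 := Nat.xor_ne_zero_iff.mpr (Ne.symm hbS)
    simp only [Finset.mem_Icc]
    omega
  have hdouble := two_mul_card_xorTriples_through (U := Finset.Icc 1 (2 ^ n - 1))
    (fun x hx => (Finset.mem_Icc.mp hx).1)
    (Finset.mem_Icc.mpr ⟨hS1, hS⟩) hclosed
  obtain ⟨k, rfl⟩ : ∃ k, n = k + 1 :=
    Nat.exists_eq_add_one.mpr (Nat.pos_of_ne_zero (by rintro rfl; omega))
  rw [Nat.card_Icc] at hdouble
  rw [Nat.add_sub_cancel]
  rw [pow_succ] at hdouble ⊢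
  omega

theorem xor_triples_through_S (n S : ℕ) (hn : 2 ≤ n) (hS1 : 1 ≤ S) (hS : S ≤ 2 ^ n - 1) :
    ((Finset.Icc 1 (2 ^ n - 1)).powerset.filter (fun t => IsXorTriple t ∧ S ∈ t)).card
      = 2 ^ (n - 1) - 1 :=
  xor_triples_through_S_general n S hS1 hS
end

section
/- Let N ≥ 5 and let S satisfy 8 < S < 16, with s = S − 8. The number of XOR-triples {a, b, c} contained in {1, …, 2^{N−1} − 1} \ {S} having at least one element congruent to 0 or to s modulo 8 equals 4 · (2^{N−4}(2^{N−4} − 1) + (2^{N−3} − 1)(2^{N−3} − 2)/6), the division being exact. -/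
open Finset

theorem card_insert_insert_xor {a b : ℕ} (ha : a ≠ 0) (hb : b ≠ 0) (hab : a ≠ b) :
    #({a, b, a ^^^ b} : Finset ℕ) = 3 :=
  card_eq_three.2 ⟨a, b, a ^^^ b, hab, fun h => hb (by simpa using h.symm),
    fun h => ha (by simpa using h.symm), rfl⟩

theorem isXorTriple_insert_insert_xor {a b : ℕ} (ha : a ≠ 0) (hb : b ≠ 0) (hab : a ≠ b) :
    IsXorTriple {a, b, a ^^^ b} := by
  refine ⟨card_insert_insert_xor ha hb hab, ?_, a, by simp, b, by simp, hab, by simp⟩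
  simp only [mem_insert, mem_singleton, forall_eq_or_imp, forall_eq]
  exact ⟨by omega, by omega, Nat.pos_of_ne_zero (by simpa using hab)⟩

theorem IsXorTriple.eq_insert_insert_xor {t : Finset ℕ} (ht : IsXorTriple t) {a b : ℕ}
    (ha : a ∈ t) (hb : b ∈ t) (hab : a ≠ b) : t = {a, b, a ^^^ b} := by
  obtain ⟨hcard, hpos, x, hx, y, hy, hxy, hxyt⟩ := ht
  have hsub : {x, y, x ^^^ y} ⊆ t := by simp [insert_subset_iff, hx, hy, hxyt]
  obtain rfl : t = {x, y, x ^^^ y} := (eq_of_subset_of_card_le hsub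
    (by rw [hcard, card_insert_insert_xor (hpos x hx).ne' (hpos y hy).ne' hxy])).symm
  simp only [mem_insert, mem_singleton] at ha hb
  rcases ha with rfl | rfl | rfl <;> rcases hb with rfl | rfl | rfl <;> grind

theorem six_mul_card_filter_isXorTriple {U : Finset ℕ} (hU : 0 ∉ U) (P : Finset ℕ → Prop)
    [DecidablePred P] :
    6 * #{t ∈ U.powerset | IsXorTriple t ∧ P t} =
      ∑ a ∈ U, #{b ∈ U | a ≠ b ∧ a ^^^ b ∈ U ∧ P {a, b, a ^^^ b}} := by
  set T := {t ∈ U.powerset | IsXorTriple t ∧ P t}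
  set pairs := {x ∈ U ×ˢ U | x.1 ≠ x.2 ∧ x.1 ^^^ x.2 ∈ U ∧ P {x.1, x.2, x.1 ^^^ x.2}}
  have hsum : ∑ a ∈ U, #{b ∈ U | a ≠ b ∧ a ^^^ b ∈ U ∧ P {a, b, a ^^^ b}} = #pairs := by
    simp only [pairs, card_filter, sum_product]
  have hmaps : ∀ x ∈ pairs, ({x.1, x.2, x.1 ^^^ x.2} : Finset ℕ) ∈ T := by
    rintro ⟨a, b⟩ hx
    simp only [pairs, mem_filter, mem_product] at hx
    obtain ⟨⟨ha, hb⟩, hab, habU, hP⟩ := hx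
    exact mem_filter.2 ⟨mem_powerset.2 (by simp [insert_subset_iff, ha, hb, habU]),
      isXorTriple_insert_insert_xor (ne_of_mem_of_not_mem ha hU) (ne_of_mem_of_not_mem hb hU) hab,
      hP⟩
  have hfiber : ∀ t ∈ T, #{x ∈ pairs | ({x.1, x.2, x.1 ^^^ x.2} : Finset ℕ) = t} = 6 := by
    intro t ht
    simp only [T, mem_filter, mem_powerset] at ht
    obtain ⟨htU, htx, hPt⟩ := ht
    suffices {x ∈ pairs | ({x.1, x.2, x.1 ^^^ x.2} : Finset ℕ) = t} = t.offDiag by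
      rw [this, offDiag_card, htx.1]
    ext ⟨a, b⟩
    simp only [pairs, mem_filter, mem_product, mem_offDiag]
    constructor
    · rintro ⟨⟨-, hab, -⟩, rfl⟩
      simp [hab]
    · rintro ⟨ha, hb, hab⟩
      have hxor := htx.eq_insert_insert_xor ha hb hab
      exact ⟨⟨⟨htU ha, htU hb⟩, hab, htU (by rw [hxor]; simp), hxor ▸ hPt⟩, hxor.symm⟩
  rw [hsum, card_eq_sum_card_fiberwise hmaps, sum_congr rfl hfiber, sum_const, smul_eq_mul,
    mul_comm]

section Partners

variable {V : Finset ℕ} {p : ℕ → Prop} [DecidablePred p] {S a : ℕ}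

theorem filter_xor_mem_erase_erase_eq_sdiff (hV : ∀ x ∈ V, ∀ y ∈ V, x ^^^ y ∈ V) (ha : a ∈ V) :
    {b ∈ (V.erase 0).erase S | a ≠ b ∧ a ^^^ b ∈ (V.erase 0).erase S} =
      V \ {0, S, a, a ^^^ S} := by
  ext b
  simp only [mem_filter, mem_erase, mem_sdiff, mem_insert, mem_singleton]
  have : a ^^^ b = S ↔ b = a ^^^ S := xor_eq_iff_right_eq a b S
  grind

theorem card_sdiff_zero_xor (hV : ∀ x ∈ V, ∀ y ∈ V, x ^^^ y ∈ V) (hS : S ∈ V) (hS0 : S ≠ 0)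
    (ha : a ∈ V) (ha0 : a ≠ 0) (haS : a ≠ S) :
    #(V \ {0, S, a, a ^^^ S}) = #V - 4 := by
  have hsub : {0, S, a, a ^^^ S} ⊆ V := by
    have h0 : 0 ∈ V := by simpa using hV S hS S hS
    simp [insert_subset_iff, *]
  have h0 : a ^^^ S ≠ 0 := by simpa using haS
  have hS' : a ^^^ S ≠ S := by simpa using ha0
  have ha' : a ^^^ S ≠ a := by simpa using hS0
  rw [card_sdiff_of_subset hsub, card_eq_four.2 ⟨0, S, a, a ^^^ S, hS0.symm, ha0.symm, h0.symm,
    haS.symm, hS'.symm, ha'.symm, rfl⟩]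

theorem filter_sdiff_zero_xor (hp : ∀ x y, p x → p y → p (x ^^^ y)) (hpS : p S) (hpa : ¬ p a) :
    {b ∈ V \ {0, S, a, a ^^^ S} | p b} = ({x ∈ V | p x}.erase 0).erase S := by
  have : ¬ p (a ^^^ S) := fun h => hpa (by simpa using hp _ _ h hpS)
  ext b
  simp only [mem_filter, mem_sdiff, mem_erase, mem_insert, mem_singleton]
  grind

theorem card_filter_xor_sdiff_zero_xor (hV : ∀ x ∈ V, ∀ y ∈ V, x ^^^ y ∈ V) (ha : a ∈ V) :
    #{b ∈ V \ {0, S, a, a ^^^ S} | p (a ^^^ b)} = #{b ∈ V \ {0, S, a, a ^^^ S} | p b} := by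
  have hxorS : ∀ b, a ^^^ b = S ↔ b = a ^^^ S := fun b => xor_eq_iff_right_eq a b S
  refine card_nbij' (a ^^^ ·) (a ^^^ ·) ?_ ?_ (fun b _ => by simp) (fun b _ => by simp) <;>
    intro b hb <;>
    simp only [mem_coe, mem_filter, mem_sdiff, mem_insert, mem_singleton] at hb ⊢ <;>
    grind

theorem card_erase_zero_erase_filter (hV : ∀ x ∈ V, ∀ y ∈ V, x ^^^ y ∈ V)
    (hp : ∀ x y, p x → p y → p (x ^^^ y)) (hS : S ∈ V) (hpS : p S) (hS0 : S ≠ 0) :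
    #(({x ∈ V | p x}.erase 0).erase S) = #{x ∈ V | p x} - 2 := by
  have h0 : 0 ∈ {x ∈ V | p x} :=
    mem_filter.2 ⟨by simpa using hV S hS S hS, by simpa using hp S S hpS hpS⟩
  have hS' : S ∈ {x ∈ V | p x}.erase 0 := mem_erase.2 ⟨hS0, mem_filter.2 ⟨hS, hpS⟩⟩
  rw [card_erase_of_mem hS', card_erase_of_mem h0, Nat.sub_sub]

theorem card_filter_xor_mem_exists_mem (hV : ∀ x ∈ V, ∀ y ∈ V, x ^^^ y ∈ V)
    (hp : ∀ x y, p x → p y → p (x ^^^ y)) (hS : S ∈ V) (hpS : p S) (hS0 : S ≠ 0)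
    (ha : a ∈ (V.erase 0).erase S) :
    #{b ∈ (V.erase 0).erase S |
        a ≠ b ∧ a ^^^ b ∈ (V.erase 0).erase S ∧ ∃ x ∈ ({a, b, a ^^^ b} : Finset ℕ), p x} =
      if p a then #V - 4 else 2 * (#{x ∈ V | p x} - 2) := by
  obtain ⟨haS, ha0, haV⟩ : a ≠ S ∧ a ≠ 0 ∧ a ∈ V := by simpa using ha
  have hsplit : {b ∈ (V.erase 0).erase S |
        a ≠ b ∧ a ^^^ b ∈ (V.erase 0).erase S ∧ ∃ x ∈ ({a, b, a ^^^ b} : Finset ℕ), p x} =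
      {b ∈ V \ {0, S, a, a ^^^ S} | p a ∨ p b ∨ p (a ^^^ b)} := by
    rw [← filter_xor_mem_erase_erase_eq_sdiff hV haV, filter_filter]
    simp only [and_assoc, exists_mem_insert, mem_singleton, exists_eq_left]
  rw [hsplit]
  split_ifs with hpa
  · rw [filter_true_of_mem fun _ _ => Or.inl hpa, card_sdiff_zero_xor hV hS hS0 haV ha0 haS]
  · have hdisj : Disjoint {b ∈ V \ {0, S, a, a ^^^ S} | p b}
        {b ∈ V \ {0, S, a, a ^^^ S} | p (a ^^^ b)} :=
      disjoint_filter.2 fun b _ hb hab => hpa (by simpa using hp _ _ hab hb)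
    simp only [hpa, false_or]
    rw [filter_or, card_union_of_disjoint hdisj, card_filter_xor_sdiff_zero_xor hV haV,
      filter_sdiff_zero_xor hp hpS hpa, card_erase_zero_erase_filter hV hp hS hpS hS0, two_mul]

theorem six_mul_card_filter_isXorTriple_exists_mem (hV : ∀ x ∈ V, ∀ y ∈ V, x ^^^ y ∈ V)
    (hp : ∀ x y, p x → p y → p (x ^^^ y)) (hS : S ∈ V) (hpS : p S) (hS0 : S ≠ 0) :
    6 * #{t ∈ ((V.erase 0).erase S).powerset | IsXorTriple t ∧ ∃ x ∈ t, p x} =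
      (#{x ∈ V | p x} - 2) * (#V - 4) + (#V - #{x ∈ V | p x}) * (2 * (#{x ∈ V | p x} - 2)) := by
  have hp0 : p 0 := by simpa using hp S S hpS hpS
  have hnot : {x ∈ (V.erase 0).erase S | ¬ p x} = {x ∈ V | ¬ p x} := by
    rw [filter_erase, filter_erase, erase_eq_of_notMem, erase_eq_of_notMem] <;> simp [*]
  rw [six_mul_card_filter_isXorTriple (by simp),
    sum_congr rfl fun a ha => card_filter_xor_mem_exists_mem hV hp hS hpS hS0 ha, sum_ite,
    sum_const, sum_const, smul_eq_mul, smul_eq_mul, filter_erase, filter_erase,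
    card_erase_zero_erase_filter hV hp hS hpS hS0, hnot, filter_not,
    card_sdiff_of_subset (filter_subset _ _)]

end Partners

theorem card_filter_range_mul_mod (q m : ℕ) (r : ℕ → Prop) [DecidablePred r] :
    #{x ∈ range (q * m) | r (x % m)} = q * #{x ∈ range m | r x} := by
  induction q with
  | zero => simp
  | succ q ih =>
    have hshift : {x ∈ (range m).map (addLeftEmbedding (q * m)) | r (x % m)} =
        {x ∈ range m | r x}.map (addLeftEmbedding (q * m)) := by
      rw [filter_map]
      congr 1
      exact filter_congr fun x hx => by simp [Nat.mul_add_mod_of_lt (mem_range.1 hx)]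
    rw [add_mul, one_mul, range_add, filter_union, card_union_of_disjoint
      (disjoint_filter_filter (disjoint_range_addLeftEmbedding _ _)), ih, hshift, card_map,
      add_one_mul]

theorem card_filter_range_mod_eight_eq_zero_or (q : ℕ) {s : ℕ} (hs0 : s ≠ 0) (hs8 : s < 8) :
    #{x ∈ range (q * 8) | x % 8 = 0 ∨ x % 8 = s} = q * 2 := by
  have hpair : {x ∈ range 8 | x = 0 ∨ x = s} = {0, s} := by
    ext x; simp only [mem_filter, mem_range, mem_insert, mem_singleton]; omega
  rw [card_filter_range_mul_mod q 8 (fun x => x = 0 ∨ x = s), hpair, card_pair hs0.symm]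

theorem mod_eight_eq_zero_or_xor {s x y : ℕ} (hx : x % 8 = 0 ∨ x % 8 = s)
    (hy : y % 8 = 0 ∨ y % 8 = s) : (x ^^^ y) % 8 = 0 ∨ (x ^^^ y) % 8 = s := by
  have hmod : (x ^^^ y) % 8 = x % 8 ^^^ y % 8 := Nat.xor_mod_two_pow (n := 3)
  rcases hx with hx | hx <;> rcases hy with hy | hy <;> simp [hmod, hx, hy]

theorem six_dvd_pow_two_sub_one_mul_sub_two (j : ℕ) : 6 ∣ (2 ^ j - 1) * (2 ^ j - 2) := by
  have h6 : Nat.factorial 3 ∣ (2 ^ j).descFactorial 3 := Nat.factorial_dvd_descFactorial _ _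
  simp only [Nat.descFactorial_succ, Nat.descFactorial_zero, Nat.factorial] at h6
  have h3 : 3 ∣ (2 ^ j - 1) * (2 ^ j - 2) := by
    refine (Nat.Coprime.pow_right j (by norm_num : Nat.Coprime 3 2)).dvd_of_dvd_mul_left ?_
    exact (by norm_num : 3 ∣ 6).trans (by simpa [mul_comm, mul_assoc, mul_left_comm] using h6)
  have h2 : 2 ∣ (2 ^ j - 1) * (2 ^ j - 2) := by
    simpa [Nat.sub_sub] using (Nat.even_mul_pred_self (2 ^ j - 1)).two_dvd
  exact Nat.Coprime.mul_dvd_of_dvd_of_dvd (by norm_num) h2 h3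

theorem sand_mandala_filled_triples (N S : ℕ) (hN : 5 ≤ N) (h8 : 8 < S) (h16 : S < 16) :
    let s := S - 8
    6 ∣ (2 ^ (N - 3) - 1) * (2 ^ (N - 3) - 2) ∧
    (((Finset.Icc 1 (2 ^ (N - 1) - 1)).erase S).powerset.filter
        (fun t => IsXorTriple t ∧ ∃ x ∈ t, x % 8 = 0 ∨ x % 8 = s)).card
      = 4 * (2 ^ (N - 4) * (2 ^ (N - 4) - 1) + (2 ^ (N - 3) - 1) * (2 ^ (N - 3) - 2) / 6) := by
  intro s
  refine ⟨six_dvd_pow_two_sub_one_mul_sub_two _, ?_⟩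
  set q := 2 ^ (N - 4)
  have hq : 2 ≤ q := le_self_pow₀ one_le_two (by omega) |>.trans' (by norm_num)
  have hV : 2 ^ (N - 1) = q * 8 := by rw [show N - 1 = N - 4 + 3 by omega, pow_add]; rfl
  have hH : 2 ^ (N - 3) = q * 2 := by rw [show N - 3 = N - 4 + 1 by omega, pow_add]; rfl
  have hU : Icc 1 (2 ^ (N - 1) - 1) = (range (2 ^ (N - 1))).erase 0 := by
    ext x; simp only [mem_Icc, mem_erase, mem_range]; omega
  have hcount := six_mul_card_filter_isXorTriple_exists_mem (V := range (2 ^ (N - 1)))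
    (p := fun x => x % 8 = 0 ∨ x % 8 = s) (S := S)
    (fun x hx y hy => mem_range.2 (Nat.xor_lt_two_pow (mem_range.1 hx) (mem_range.1 hy)))
    (fun _ _ => mod_eight_eq_zero_or_xor) (mem_range.2 (by omega)) (Or.inr (by omega)) (by omega)
  rw [card_range, hV, card_filter_range_mod_eight_eq_zero_or q (by omega) (by omega)] at hcount
  obtain ⟨m, hm⟩ := six_dvd_pow_two_sub_one_mul_sub_two (N - 3)
  rw [hU, hm, Nat.mul_div_cancel_left m (by norm_num), hV]
  rw [hH] at hm
  refine Nat.eq_of_mul_eq_mul_left (by norm_num : 0 < 6) (hcount.trans ?_)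
  zify [show 1 ≤ q by omega, show 1 ≤ q * 2 by omega, show 2 ≤ q * 2 by omega,
    show 4 ≤ q * 8 by omega, show q * 2 ≤ q * 8 by omega] at hm ⊢
  linarith
end
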